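/- arXiv:1806.03530 — 2 statements merged into one kernel-verified Lean document; each statement's English description precedes it below -/
import Mathlib

section
/- Let r > ℓ ≥ 2 with ℓ ≤ r/2, and write r = xℓ + y with x ≥ 1, 1 ≤ y ≤ ℓ. Let G be the graph on n vertices (n divisible by r) formed from the complete (x+1)-partite graph with parts V_1 of size yn/r − 1, V_2 of size ℓn/r + 1, and V_3,…,V_{x+1} each of size ℓn/r, by adding inside each part V_i a K_{ℓ+1}-free graph. Then G has minimum degree (r−ℓ)n/r − 1 and G contains no K_r-factor. -/
open Finset

/-- A `K_r`-factor: a spanning collection of pairwise disjoint `r`-cliques. -/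
def KFactor {β : Type*} [Fintype β] [DecidableEq β] (G : SimpleGraph β) (r : ℕ) : Prop :=
  ∃ 𝒯 : Finset (Finset β), (∀ T ∈ 𝒯, G.IsNClique r T) ∧
    (𝒯 : Set (Finset β)).PairwiseDisjoint id ∧ 𝒯.biUnion id = Finset.univ

/-- The `(x+1)`-partite construction: parts of sizes `yn/r − 1`, `ℓn/r + 1`, `ℓn/r, …`,
complete between parts, `K_{ℓ+1}`-free inside each part. It has minimum degree at least
`(r−ℓ)n/r − 1` and no `K_r`-factor. -/
theorem lower_bound_construction {β : Type*} [Fintype β] [DecidableEq β]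
    (G : SimpleGraph β) (r ℓ x y n : ℕ)
    (hℓ : 2 ≤ ℓ) (hr : ℓ < r) (hhalf : 2 * ℓ ≤ r)
    (hxy : r = x * ℓ + y) (hy1 : 1 ≤ y) (hy2 : y ≤ ℓ) (hx : 1 ≤ x)
    (hn : Fintype.card β = n) (hdvd : r ∣ n)
    (P : Fin (x + 1) → Finset β)
    (hdisj : (Set.univ : Set (Fin (x + 1))).PairwiseDisjoint (fun i => ((P i : Finset β) : Set β)))
    (hcover : ∀ v : β, ∃ i, v ∈ P i)
    (hsize0 : (P 0).card + 1 = y * (n / r))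
    (hsize1 : (P 1).card = ℓ * (n / r) + 1)
    (hsize : ∀ i : Fin (x + 1), 2 ≤ (i : ℕ) → (P i).card = ℓ * (n / r))
    (hcross : ∀ v w : β, ∀ i j : Fin (x + 1), i ≠ j → v ∈ P i → w ∈ P j → G.Adj v w)
    (hfree : ∀ i : Fin (x + 1), ∀ T ⊆ P i, ¬ G.IsNClique (ℓ + 1) T) :
    (∀ v : β, (r - ℓ) * (n / r) - 1 ≤ (G.neighborSet v).ncard) ∧ ¬ KFactor G r := by
  have hr0 : 0 < r := by omega
  set m := n / r with hmdef
  clear_value m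
  have hnm : r * m = n := by rw [hmdef]; exact Nat.mul_div_cancel' hdvd
  have hsub : (r - ℓ) * m = r * m - ℓ * m := Nat.sub_mul r ℓ m
  constructor
  · intro v
    obtain ⟨i, hi⟩ := hcover v
    have hsubset : ((univ \ P i : Finset β) : Set β) ⊆ G.neighborSet v := by
      intro w hw
      simp only [coe_sdiff, coe_univ, Set.mem_diff, Set.mem_univ, true_and, mem_coe] at hw
      obtain ⟨j, hj⟩ := hcover w
      have hij : i ≠ j := fun h => hw (by rwa [h])
      exact hcross v w i j hij hi hj
    have h1 : (univ \ P i).card ≤ (G.neighborSet v).ncard := by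
      have := Set.ncard_le_ncard hsubset (Set.toFinite _)
      rwa [Set.ncard_coe_finset] at this
    have h2 : (univ \ P i).card = n - (P i).card := by
      rw [card_sdiff_of_subset (subset_univ _), card_univ, hn]
    have hPi : (P i).card ≤ ℓ * m + 1 := by
      by_cases h0 : (i : ℕ) = 0
      · have : i = 0 := Fin.ext (by simpa using h0)
        subst this
        have : y * m ≤ ℓ * m := Nat.mul_le_mul_right m hy2
        omega
      · by_cases h1' : (i : ℕ) = 1
        · have hone : ((1 : Fin (x + 1)) : ℕ) = 1 := by
            rw [Fin.val_one']
            exact Nat.mod_eq_of_lt (by omega)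
          have : i = 1 := Fin.ext (by omega)
          subst this
          omega
        · rw [hsize i (by omega)]
          omega
    calc (r - ℓ) * m - 1 = r * m - ℓ * m - 1 := by rw [hsub]
      _ ≤ n - (ℓ * m + 1) := by omega
      _ ≤ n - (P i).card := Nat.sub_le_sub_left hPi n
      _ = (univ \ P i).card := h2.symm
      _ ≤ _ := h1
  · rintro ⟨𝒯, hclique, hdisjT, hcov⟩
    have hcardT : ∀ T ∈ 𝒯, T.card = r := fun T hT => (hclique T hT).2
    -- |𝒯| = m
    have hbu : (𝒯.biUnion id).card = ∑ T ∈ 𝒯, T.card :=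
      card_biUnion fun a ha b hb hab => hdisjT (mem_coe.2 ha) (mem_coe.2 hb) hab
    have hsumn : ∑ T ∈ 𝒯, T.card = n := by rw [← hbu, hcov, card_univ, hn]
    have hTn : 𝒯.card * r = n := by
      rw [← hsumn, Finset.sum_congr rfl hcardT, sum_const, smul_eq_mul]
    have hTm : 𝒯.card = m := by
      have : r * 𝒯.card = r * m := by rw [hnm, ← hTn]; ring
      exact Nat.eq_of_mul_eq_mul_left hr0 this
    -- each clique hits each part in at most ℓ vertices
    have hint : ∀ T ∈ 𝒯, ∀ i, (T ∩ P i).card ≤ ℓ := by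
      intro T hT i
      by_contra h
      push_neg at h
      obtain ⟨S, hS, hScard⟩ := Finset.exists_subset_card_eq (by omega : ℓ + 1 ≤ (T ∩ P i).card)
      refine hfree i S (hS.trans inter_subset_right) ⟨?_, hScard⟩
      exact (hclique T hT).1.subset (Finset.coe_subset.mpr (hS.trans inter_subset_left))
    -- each clique's intersections with the parts sum to r
    have hTsum : ∀ T ∈ 𝒯, ∑ i, (T ∩ P i).card = r := by
      intro T hT
      have heq : Finset.univ.biUnion (fun i => T ∩ P i) = T := by
        ext v
        simp only [mem_biUnion, mem_univ, true_and, mem_inter]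
        constructor
        · rintro ⟨i, hv, _⟩; exact hv
        · intro hv; obtain ⟨i, hi⟩ := hcover v; exact ⟨i, hv, hi⟩
      have hc := Finset.card_biUnion (s := (univ : Finset (Fin (x + 1))))
        (t := fun i => T ∩ P i) (fun a _ b _ hab => by
          have hd := hdisj (Set.mem_univ a) (Set.mem_univ b) hab
          have hd' : Disjoint (P a) (P b) := Finset.disjoint_coe.mp hd
          exact hd'.mono inter_subset_right inter_subset_right)
      rw [heq, hcardT T hT] at hc
      exact hc.symm
    -- each clique contains at least y vertices of P 0
    have h0 : ∀ T ∈ 𝒯, y ≤ (T ∩ P 0).card := by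
      intro T hT
      have hs := hTsum T hT
      have hrest : ∑ i ∈ univ.erase 0, (T ∩ P i).card ≤ x * ℓ := by
        calc ∑ i ∈ univ.erase 0, (T ∩ P i).card ≤ ∑ _i ∈ univ.erase 0, ℓ :=
              Finset.sum_le_sum fun i _ => hint T hT i
          _ = x * ℓ := by
              rw [sum_const, smul_eq_mul, card_erase_of_mem (mem_univ _), card_univ,
                Fintype.card_fin]
              simp
      have hsplit : ∑ i ∈ univ.erase 0, (T ∩ P i).card + (T ∩ P 0).card = ∑ i, (T ∩ P i).card :=
        Finset.sum_erase_add _ _ (mem_univ _)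
      omega
    -- count P 0
    have hP0eq : 𝒯.biUnion (fun T => T ∩ P 0) = P 0 := by
      ext v
      simp only [mem_biUnion, mem_inter]
      constructor
      · rintro ⟨T, _, _, hv⟩; exact hv
      · intro hv
        have : v ∈ 𝒯.biUnion id := by rw [hcov]; exact mem_univ v
        obtain ⟨T, hT, hvT⟩ := mem_biUnion.1 this
        exact ⟨T, hT, hvT, hv⟩
    have hP0card : (P 0).card = ∑ T ∈ 𝒯, (T ∩ P 0).card := by
      conv_lhs => rw [← hP0eq]
      exact Finset.card_biUnion (s := 𝒯) (t := fun T => T ∩ P 0) fun a ha b hb hab =>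
        ((hdisjT (mem_coe.2 ha) (mem_coe.2 hb) hab).mono inter_subset_left inter_subset_left)
    have hge : 𝒯.card * y ≤ ∑ T ∈ 𝒯, (T ∩ P 0).card := by
      calc 𝒯.card * y = ∑ _T ∈ 𝒯, y := by rw [sum_const, smul_eq_mul]
        _ ≤ ∑ T ∈ 𝒯, (T ∩ P 0).card := Finset.sum_le_sum h0
    have hym : y * m ≤ 𝒯.card * y := by rw [hTm]; ring_nf; omega
    omega
end

section
/- Let G be a graph on n vertices such that for every vertex v there is a family H_v of at least γn pairwise disjoint (h−1)-sets each forming a copy of H together with v. If each vertex of G is included in a random set X independently with probability q, then with positive probability: |X| ≤ 2nq and for every vertex v at least q^{h−1}|H_v|/2 of the sets in H_v are entirely contained in X, provided n is sufficiently large. -/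
open Finset

section BernAux
variable {β : Type*} [DecidableEq β]

private lemma bern_mass (q : ℝ) (S : Finset β) :
    ∑ X ∈ S.powerset, q ^ X.card * (1 - q) ^ (S \ X).card = 1 := by
  have h := Finset.prod_add (fun _ : β => q) (fun _ : β => 1 - q) S
  simp only [Finset.prod_const] at h
  rw [← h]
  simp

private lemma bern_split (q : ℝ) (S T : Finset β) (hST : Disjoint S T) (F : Finset β → ℝ) :
    ∑ X ∈ (S ∪ T).powerset, q ^ X.card * (1 - q) ^ ((S ∪ T) \ X).card * F X
    = ∑ X ∈ S.powerset, ∑ Y ∈ T.powerset,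
        (q ^ X.card * (1 - q) ^ (S \ X).card) *
          ((q ^ Y.card * (1 - q) ^ (T \ Y).card) * F (X ∪ Y)) := by
  rw [← Finset.sum_product']
  refine (Finset.sum_nbij' (i := fun P : Finset β × Finset β => P.1 ∪ P.2)
    (j := fun Z => (Z ∩ S, Z ∩ T)) ?_ ?_ ?_ ?_ ?_).symm
  · rintro ⟨X, Y⟩ hXY
    rw [Finset.mem_product, Finset.mem_powerset, Finset.mem_powerset] at hXY
    exact Finset.mem_powerset.2 (Finset.union_subset_union hXY.1 hXY.2)
  · intro Z hZ
    rw [Finset.mem_powerset] at hZ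
    exact Finset.mem_product.2 ⟨Finset.mem_powerset.2 Finset.inter_subset_right,
      Finset.mem_powerset.2 Finset.inter_subset_right⟩
  · rintro ⟨X, Y⟩ hXY
    rw [Finset.mem_product, Finset.mem_powerset, Finset.mem_powerset] at hXY
    have hd := Finset.disjoint_left.1 hST
    have h1 : (X ∪ Y) ∩ S = X := by
      ext z
      simp only [Finset.mem_inter, Finset.mem_union]
      constructor
      · rintro ⟨hz | hz, hzS⟩
        · exact hz
        · exact ((hd hzS) (hXY.2 hz)).elim
      · intro hz
        exact ⟨Or.inl hz, hXY.1 hz⟩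
    have h2 : (X ∪ Y) ∩ T = Y := by
      ext z
      simp only [Finset.mem_inter, Finset.mem_union]
      constructor
      · rintro ⟨hz | hz, hzT⟩
        · exact ((hd (hXY.1 hz)) hzT).elim
        · exact hz
      · intro hz
        exact ⟨Or.inr hz, hXY.2 hz⟩
    simp only
    rw [h1, h2]
  · intro Z hZ
    rw [Finset.mem_powerset] at hZ
    simp only
    rw [← Finset.inter_union_distrib_left, Finset.inter_eq_left.2 hZ]
  · rintro ⟨X, Y⟩ hXY
    rw [Finset.mem_product, Finset.mem_powerset, Finset.mem_powerset] at hXY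
    obtain ⟨hX, hY⟩ := hXY
    have hXYdisj : Disjoint X Y := Finset.disjoint_of_subset_left hX
      (Finset.disjoint_of_subset_right hY hST)
    have hcard : (X ∪ Y).card = X.card + Y.card := Finset.card_union_of_disjoint hXYdisj
    have hsd : (S ∪ T) \ (X ∪ Y) = (S \ X) ∪ (T \ Y) := by
      ext z
      simp only [Finset.mem_sdiff, Finset.mem_union, not_or]
      constructor
      · rintro ⟨hz | hz, hzX, hzY⟩
        · exact Or.inl ⟨hz, hzX⟩
        · exact Or.inr ⟨hz, hzY⟩
      · rintro (⟨hz, hzX⟩ | ⟨hz, hzY⟩)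
        · exact ⟨Or.inl hz, hzX, fun hzy => (Finset.disjoint_left.1 hST hz) (hY hzy)⟩
        · exact ⟨Or.inr hz, fun hzx => (Finset.disjoint_left.1 hST (hX hzx)) hz, hzY⟩
    have hsdcard : ((S ∪ T) \ (X ∪ Y)).card = (S \ X).card + (T \ Y).card := by
      rw [hsd]
      exact Finset.card_union_of_disjoint (Finset.disjoint_of_subset_left
        Finset.sdiff_subset (Finset.disjoint_of_subset_right Finset.sdiff_subset hST))
    simp only
    rw [hcard, hsdcard, pow_add, pow_add]
    ring

private lemma bern_prod (q : ℝ) : ∀ (F : Finset (Finset β)) (S : Finset β),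
    (↑F : Set (Finset β)).PairwiseDisjoint id → (∀ A ∈ F, A ⊆ S) →
    ∀ f g : Finset β → ℝ,
    ∑ X ∈ S.powerset, q ^ X.card * (1 - q) ^ (S \ X).card *
        ∏ A ∈ F, (if A ⊆ X then f A else g A)
    = ∏ A ∈ F, (q ^ A.card * f A + (1 - q ^ A.card) * g A) := by
  intro F
  induction F using Finset.induction_on with
  | empty =>
    intro S _ _ f g
    simpa using bern_mass q S
  | @insert A F hA ih =>
    intro S hdisj hsub f g
    have hAS : A ⊆ S := hsub A (Finset.mem_insert_self A F)
    have hdAT : Disjoint A (S \ A) := Finset.disjoint_sdiff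
    have hS : S = A ∪ (S \ A) := by rw [Finset.union_sdiff_of_subset hAS]
    conv_lhs => rw [hS]
    rw [bern_split q A (S \ A) hdAT]
    have step : ∀ X ∈ A.powerset, ∀ Y ∈ (S \ A).powerset,
        (∏ B ∈ insert A F, if B ⊆ X ∪ Y then f B else g B)
        = (if A ⊆ X then f A else g A) * ∏ B ∈ F, (if B ⊆ Y then f B else g B) := by
      intro X hX Y hY
      rw [Finset.mem_powerset] at hX hY
      rw [Finset.prod_insert hA]
      have c1 : (A ⊆ X ∪ Y) ↔ A ⊆ X := by
        constructor
        · intro hAXY a ha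
          rcases Finset.mem_union.1 (hAXY ha) with h' | h'
          · exact h'
          · exact ((Finset.mem_sdiff.1 (hY h')).2 ha).elim
        · intro h'
          exact h'.trans Finset.subset_union_left
      have c2 : ∀ B ∈ F, ((B ⊆ X ∪ Y) ↔ B ⊆ Y) := by
        intro B hB
        have hAB : Disjoint A B := hdisj (by simp) (by simp [hB])
          (fun hEq => hA (by rw [hEq]; exact hB))
        constructor
        · intro hBXY b hb
          rcases Finset.mem_union.1 (hBXY hb) with h' | h'
          · exact ((Finset.disjoint_right.1 hAB hb) (hX h')).elim
          · exact h'
        · intro h'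
          exact h'.trans Finset.subset_union_right
      rw [if_congr c1 rfl rfl]
      congr 1
      exact Finset.prod_congr rfl fun B hB => if_congr (c2 B hB) rfl rfl
    have sep : ∑ X ∈ A.powerset, ∑ Y ∈ (S \ A).powerset,
        (q ^ X.card * (1 - q) ^ (A \ X).card) *
          ((q ^ Y.card * (1 - q) ^ ((S \ A) \ Y).card) *
            ∏ B ∈ insert A F, (if B ⊆ X ∪ Y then f B else g B))
        = (∑ X ∈ A.powerset, q ^ X.card * (1 - q) ^ (A \ X).card *
            (if A ⊆ X then f A else g A))
          * (∑ Y ∈ (S \ A).powerset, q ^ Y.card * (1 - q) ^ ((S \ A) \ Y).card *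
            ∏ B ∈ F, (if B ⊆ Y then f B else g B)) := by
      rw [Finset.sum_mul_sum]
      refine Finset.sum_congr rfl fun X hX => Finset.sum_congr rfl fun Y hY => ?_
      rw [step X hX Y hY]
      ring
    rw [sep]
    have first : ∑ X ∈ A.powerset, q ^ X.card * (1 - q) ^ (A \ X).card *
        (if A ⊆ X then f A else g A) = q ^ A.card * f A + (1 - q ^ A.card) * g A := by
      have hsplit : ∀ X ∈ A.powerset,
          q ^ X.card * (1 - q) ^ (A \ X).card * (if A ⊆ X then f A else g A)
          = q ^ X.card * (1 - q) ^ (A \ X).card * g A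
            + (if X = A then q ^ A.card * (f A - g A) else 0) := by
        intro X hX
        rw [Finset.mem_powerset] at hX
        by_cases hXA : X = A
        · subst hXA
          rw [if_pos (Finset.Subset.refl X), if_pos rfl, Finset.sdiff_self,
            Finset.card_empty, pow_zero]
          ring
        · have hns : ¬ A ⊆ X := fun h' => hXA (Finset.Subset.antisymm hX h')
          simp [hns, hXA]
      rw [Finset.sum_congr rfl hsplit, Finset.sum_add_distrib,
        Finset.sum_ite_eq' A.powerset A, if_pos (Finset.mem_powerset_self A)]
      have : ∑ X ∈ A.powerset, q ^ X.card * (1 - q) ^ (A \ X).card * g A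
          = (∑ X ∈ A.powerset, q ^ X.card * (1 - q) ^ (A \ X).card) * g A := by
        rw [Finset.sum_mul]
      rw [this, bern_mass q A]
      ring
    have hsub' : ∀ B ∈ F, B ⊆ S \ A := by
      intro B hB
      rw [Finset.subset_sdiff]
      exact ⟨hsub B (Finset.mem_insert_of_mem hB),
        (hdisj (by simp) (by simp [hB]) (fun hEq => hA (by rw [hEq]; exact hB))).symm⟩
    have hdisj' : (↑F : Set (Finset β)).PairwiseDisjoint id :=
      hdisj.subset (Finset.coe_subset.2 (Finset.subset_insert A F))
    rw [first, ih (S \ A) hdisj' hsub' f g, Finset.prod_insert hA]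

private lemma markov_ineq {ι : Type*} (s : Finset ι) (w Z : ι → ℝ) (hw : ∀ i ∈ s, 0 ≤ w i)
    (hZ : ∀ i ∈ s, 0 ≤ Z i) (a : ℝ) (ha : 0 < a) (P : ι → Prop) [DecidablePred P]
    (hP : ∀ i ∈ s, P i → a ≤ Z i) :
    ∑ i ∈ s.filter P, w i ≤ (∑ i ∈ s, w i * Z i) / a := by
  rw [le_div_iff₀ ha]
  calc (∑ i ∈ s.filter P, w i) * a = ∑ i ∈ s.filter P, w i * a := by rw [Finset.sum_mul]
    _ ≤ ∑ i ∈ s.filter P, w i * Z i := by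
        refine Finset.sum_le_sum fun i hi => ?_
        have hi' := Finset.mem_filter.1 hi
        exact mul_le_mul_of_nonneg_left (hP i hi'.1 hi'.2) (hw i hi'.1)
    _ ≤ ∑ i ∈ s, w i * Z i := by
        refine Finset.sum_le_sum_of_subset_of_nonneg (Finset.filter_subset P s)
          fun i hi _ => mul_nonneg (hw i hi) (hZ i hi)

end BernAux

/-- `T` is the vertex set of a copy of `H` in `G`. -/
def IsHCopy {α β : Type*} [Fintype α] [DecidableEq β]
    (H : SimpleGraph α) (G : SimpleGraph β) (T : Finset β) : Prop :=
  ∃ f : α → β, Function.Injective f ∧ Finset.image f Finset.univ = T ∧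
    ∀ a b, H.Adj a b → G.Adj (f a) (f b)

open Classical in
/-- If every vertex `v` has a family `𝓗 v` of at least `γn` pairwise disjoint `(h−1)`-sets
each forming a copy of `H` with `v`, then a random subset `X` (each vertex kept with
probability `q`) satisfies, with positive probability, `|X| ≤ 2nq` and for every `v` at
least `q^{h−1}|𝓗 v|/2` members of `𝓗 v` lie inside `X`, for `n` large. The random subset is
modelled by summing the Bernoulli weight `q^{|X|}(1-q)^{n-|X|}` over all subsets `X`. -/
theorem random_subset_good {α : Type*} [Fintype α] (H : SimpleGraph α) (h : ℕ)
    (hh : Fintype.card α = h) (γ q : ℝ) (hγ : 0 < γ) (hq0 : 0 < q) (hq1 : q < 1) :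
    ∃ n₀ : ℕ, ∀ (β : Type) [Fintype β] [DecidableEq β] (G : SimpleGraph β) (n : ℕ),
      Fintype.card β = n → n₀ ≤ n →
      ∀ 𝓗 : β → Finset (Finset β),
        (∀ v, γ * n ≤ ((𝓗 v).card : ℝ)) →
        (∀ v, ((𝓗 v : Finset (Finset β)) : Set (Finset β)).PairwiseDisjoint id) →
        (∀ v, ∀ A ∈ 𝓗 v, v ∉ A ∧ A.card = h - 1 ∧ IsHCopy H G (insert v A)) →
        0 < ∑ X ∈ (Finset.univ : Finset β).powerset,
          (if ((X.card : ℝ) ≤ 2 * n * q ∧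
              ∀ v : β, q ^ (h - 1) * ((𝓗 v).card : ℝ) / 2 ≤
                (((𝓗 v).filter (fun A => A ⊆ X)).card : ℝ))
          then q ^ X.card * (1 - q) ^ (n - X.card) else 0) := by

  set p : ℝ := q ^ (h - 1) with hp
  have hp0 : 0 < p := pow_pos hq0 _
  have hp1 : p ≤ 1 := pow_le_one₀ hq0.le hq1.le
  have h2pos : (0:ℝ) < 2 := by norm_num
  set c₀ : ℝ := (2 : ℝ) ^ (p / 2) * (1 - p / 2) with hc₀
  have hhalf : 0 < 1 - p / 2 := by linarith
  have hc₀pos : 0 < c₀ := mul_pos (Real.rpow_pos_of_pos h2pos _) hhalf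
  have hlog2lt1 : Real.log 2 < 1 := by
    rw [Real.log_lt_iff_lt_exp h2pos]
    calc (2:ℝ) < 2.7182818283 := by norm_num
      _ < Real.exp 1 := Real.exp_one_gt_d9
  have hlog2pos : 0 < Real.log 2 := Real.log_pos (by norm_num)
  have hc₀lt1 : c₀ < 1 := by
    set t : ℝ := p / 2 * Real.log 2 with ht
    have ht0 : 0 < t := mul_pos (by linarith) hlog2pos
    have htp : t < p / 2 := by
      have hp2 : 0 < p / 2 := by linarith
      calc t = p / 2 * Real.log 2 := ht
        _ < p / 2 * 1 := by exact mul_lt_mul_of_pos_left hlog2lt1 hp2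
        _ = p / 2 := mul_one _
    have ht1 : 0 < 1 - t := by linarith
    have hkey : Real.exp t * (1 - t) < 1 := by
      have h1 : 1 - t < Real.exp (-t) := by
        have h2 := Real.add_one_lt_exp (x := -t) (by linarith)
        linarith
      rw [Real.exp_neg] at h1
      have h3 := mul_lt_mul_of_pos_left h1 (Real.exp_pos t)
      rwa [mul_inv_cancel₀ (Real.exp_pos t).ne'] at h3
    have h2t : (2:ℝ) ^ (p / 2) = Real.exp t := by
      rw [Real.rpow_def_of_pos h2pos, mul_comm]
    calc c₀ = Real.exp t * (1 - p / 2) := by rw [hc₀, h2t]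
      _ < Real.exp t * (1 - t) := by
          have := Real.exp_pos t
          nlinarith
      _ < 1 := hkey
  set c₁ : ℝ := c₀ ^ γ with hc₁
  have hc₁0 : 0 < c₁ := Real.rpow_pos_of_pos hc₀pos γ
  have hc₁1 : c₁ < 1 := Real.rpow_lt_one hc₀pos.le hc₀lt1 hγ
  obtain ⟨N, hN⟩ := Filter.eventually_atTop.1
    ((tendsto_self_mul_const_pow_of_lt_one hc₁0.le hc₁1).eventually_lt_const
      (by norm_num : (0:ℝ) < 1/2))
  refine ⟨max N 1, ?_⟩
  intro β _ _ G n hcard hn 𝓗 hγ𝓗 hdisj𝓗 hcopy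
  have hn1 : 1 ≤ n := le_trans (le_max_right N 1) hn
  have hnN : N ≤ n := le_trans (le_max_left N 1) hn
  have hnR : (1:ℝ) ≤ n := by exact_mod_cast hn1
  have hq1' : 0 < 1 - q := by linarith
  have hwnn : ∀ X : Finset β, 0 ≤ q ^ X.card * (1 - q) ^ ((univ : Finset β) \ X).card :=
    fun X => mul_nonneg (pow_nonneg hq0.le _) (pow_nonneg hq1'.le _)
  have hexp : ∀ X : Finset β, n - X.card = ((univ : Finset β) \ X).card := by
    intro X
    rw [Finset.card_sdiff_of_subset (Finset.subset_univ X), Finset.card_univ, hcard]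
  simp only [hexp]
  -- expectation of a single vertex indicator
  have exvertex : ∀ v : β,
      ∑ X ∈ (univ : Finset β).powerset, q ^ X.card * (1 - q) ^ ((univ : Finset β) \ X).card
        * (if v ∈ X then (1:ℝ) else 0) = q := by
    intro v
    have hpd : (↑({({v} : Finset β)} : Finset (Finset β)) : Set (Finset β)).PairwiseDisjoint
        id := by simp
    have hb := bern_prod q {({v} : Finset β)} univ hpd (fun A _ => Finset.subset_univ A)
      (fun _ => (1:ℝ)) (fun _ => (0:ℝ))
    simp only [Finset.prod_singleton, Finset.card_singleton, pow_one, mul_one, mul_zero,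
      add_zero] at hb
    calc ∑ X ∈ (univ : Finset β).powerset, q ^ X.card * (1 - q) ^ ((univ : Finset β) \ X).card
          * (if v ∈ X then (1:ℝ) else 0)
        = ∑ X ∈ (univ : Finset β).powerset, q ^ X.card * (1 - q) ^ ((univ : Finset β) \ X).card
          * (if ({v} : Finset β) ⊆ X then (1:ℝ) else 0) := by
          refine Finset.sum_congr rfl fun X _ => ?_
          simp only [Finset.singleton_subset_iff]
      _ = q := hb
  -- expected size
  have ecard : ∑ X ∈ (univ : Finset β).powerset,
      q ^ X.card * (1 - q) ^ ((univ : Finset β) \ X).card * (X.card : ℝ) = n * q := by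
    have hcs : ∀ X : Finset β,
        (X.card : ℝ) = ∑ v ∈ (univ : Finset β), (if v ∈ X then (1:ℝ) else 0) := by
      intro X
      rw [Finset.sum_ite_mem, Finset.univ_inter, Finset.sum_const, nsmul_eq_mul, mul_one]
    calc ∑ X ∈ (univ : Finset β).powerset,
          q ^ X.card * (1 - q) ^ ((univ : Finset β) \ X).card * (X.card : ℝ)
        = ∑ X ∈ (univ : Finset β).powerset, ∑ v ∈ (univ : Finset β),
            q ^ X.card * (1 - q) ^ ((univ : Finset β) \ X).card
              * (if v ∈ X then (1:ℝ) else 0) := by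
          refine Finset.sum_congr rfl fun X _ => ?_
          rw [hcs X, Finset.mul_sum]
      _ = ∑ v ∈ (univ : Finset β), ∑ X ∈ (univ : Finset β).powerset,
            q ^ X.card * (1 - q) ^ ((univ : Finset β) \ X).card
              * (if v ∈ X then (1:ℝ) else 0) := Finset.sum_comm
      _ = ∑ _v ∈ (univ : Finset β), q := Finset.sum_congr rfl fun v _ => exvertex v
      _ = n * q := by rw [Finset.sum_const, Finset.card_univ, hcard, nsmul_eq_mul]
  have hnpos : (0:ℝ) < n := lt_of_lt_of_le one_pos hnR
  -- size bound
  have sizebound : ∑ X ∈ (univ : Finset β).powerset,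
      (if ¬ ((X.card : ℝ) ≤ 2 * n * q)
        then q ^ X.card * (1 - q) ^ ((univ : Finset β) \ X).card else 0) ≤ 1/2 := by
    rw [← Finset.sum_filter]
    have h2nq : 0 < 2 * (n:ℝ) * q := by positivity
    have hmk := markov_ineq ((univ : Finset β).powerset)
      (fun X => q ^ X.card * (1 - q) ^ ((univ : Finset β) \ X).card)
      (fun X => (X.card : ℝ)) (fun X _ => hwnn X) (fun X _ => Nat.cast_nonneg _)
      (2 * n * q) h2nq (fun X => ¬ ((X.card : ℝ) ≤ 2 * n * q))
      (fun X _ hX => le_of_lt (not_le.1 hX))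
    rw [ecard] at hmk
    calc ∑ X ∈ (univ : Finset β).powerset.filter (fun X => ¬ ((X.card : ℝ) ≤ 2 * n * q)),
          q ^ X.card * (1 - q) ^ ((univ : Finset β) \ X).card
        ≤ (n * q) / (2 * n * q) := hmk
      _ = 1/2 := by
          rw [div_eq_div_iff h2nq.ne' (by norm_num : (2:ℝ) ≠ 0)]
          ring
  -- per-vertex bound
  have vertexbound : ∀ v : β, ∑ X ∈ (univ : Finset β).powerset,
      (if ¬ (p * ((𝓗 v).card : ℝ) / 2 ≤ (((𝓗 v).filter (fun A => A ⊆ X)).card : ℝ))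
        then q ^ X.card * (1 - q) ^ ((univ : Finset β) \ X).card else 0) ≤ c₁ ^ n := by
    intro v
    rw [← Finset.sum_filter]
    have hmR : γ * n ≤ ((𝓗 v).card : ℝ) := hγ𝓗 v
    have hapos : (0:ℝ) < (2⁻¹ : ℝ) ^ (p * ((𝓗 v).card : ℝ) / 2) :=
      Real.rpow_pos_of_pos (by norm_num) _
    have hmk := markov_ineq ((univ : Finset β).powerset)
      (fun X => q ^ X.card * (1 - q) ^ ((univ : Finset β) \ X).card)
      (fun X => (2⁻¹ : ℝ) ^ (((𝓗 v).filter (fun A => A ⊆ X)).card))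
      (fun X _ => hwnn X) (fun X _ => pow_nonneg (by norm_num) _)
      ((2⁻¹ : ℝ) ^ (p * ((𝓗 v).card : ℝ) / 2)) hapos
      (fun X => ¬ (p * ((𝓗 v).card : ℝ) / 2 ≤ (((𝓗 v).filter (fun A => A ⊆ X)).card : ℝ)))
      (fun X _ hX => by
        have hlt : ((((𝓗 v).filter (fun A => A ⊆ X)).card : ℝ)) < p * ((𝓗 v).card : ℝ) / 2 :=
          not_le.1 hX
        have h4 := Real.rpow_lt_rpow_of_exponent_gt (x := (2⁻¹ : ℝ)) (by norm_num)
          (by norm_num) hlt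
        rw [Real.rpow_natCast] at h4
        exact h4.le)
    have EZ : ∑ X ∈ (univ : Finset β).powerset,
        q ^ X.card * (1 - q) ^ ((univ : Finset β) \ X).card
          * (2⁻¹ : ℝ) ^ (((𝓗 v).filter (fun A => A ⊆ X)).card)
        = (1 - p / 2) ^ (𝓗 v).card := by
      have hprod : ∀ X : Finset β,
          ((2⁻¹:ℝ) ^ (((𝓗 v).filter (fun A => A ⊆ X)).card))
          = ∏ A ∈ 𝓗 v, (if A ⊆ X then (2⁻¹:ℝ) else 1) := by
        intro X
        rw [Finset.prod_ite, Finset.prod_const, Finset.prod_const, one_pow, mul_one]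
      calc ∑ X ∈ (univ : Finset β).powerset,
            q ^ X.card * (1 - q) ^ ((univ : Finset β) \ X).card
              * (2⁻¹ : ℝ) ^ (((𝓗 v).filter (fun A => A ⊆ X)).card)
          = ∑ X ∈ (univ : Finset β).powerset,
            q ^ X.card * (1 - q) ^ ((univ : Finset β) \ X).card
              * ∏ A ∈ 𝓗 v, (if A ⊆ X then (2⁻¹:ℝ) else 1) := by
            refine Finset.sum_congr rfl fun X _ => ?_
            rw [hprod X]
        _ = ∏ A ∈ 𝓗 v, (q ^ A.card * 2⁻¹ + (1 - q ^ A.card) * 1) :=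
            bern_prod q (𝓗 v) univ (hdisj𝓗 v) (fun A _ => Finset.subset_univ A) _ _
        _ = ∏ _A ∈ 𝓗 v, (1 - p / 2) := by
            refine Finset.prod_congr rfl fun A hA => ?_
            rw [(hcopy v A hA).2.1, ← hp]
            ring
        _ = (1 - p / 2) ^ (𝓗 v).card := Finset.prod_const _
    rw [EZ] at hmk
    have hstep1 : (1 - p / 2) ^ (𝓗 v).card / (2⁻¹ : ℝ) ^ (p * ((𝓗 v).card : ℝ) / 2)
        = c₀ ^ (𝓗 v).card := by
      rw [Real.inv_rpow (by norm_num : (0:ℝ) ≤ 2), div_eq_mul_inv, inv_inv]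
      have h2m : (2:ℝ) ^ (p * ((𝓗 v).card : ℝ) / 2) = ((2:ℝ) ^ (p/2)) ^ (𝓗 v).card := by
        rw [show p * ((𝓗 v).card : ℝ) / 2 = p / 2 * ((𝓗 v).card : ℝ) by ring,
          Real.rpow_mul (by norm_num : (0:ℝ) ≤ 2), Real.rpow_natCast]
      rw [h2m, ← mul_pow]
      congr 1
      rw [hc₀]
      ring
    have hstep2 : c₀ ^ (𝓗 v).card ≤ c₁ ^ n := by
      rw [← Real.rpow_natCast c₀ (𝓗 v).card]
      have hb1 : c₀ ^ (((𝓗 v).card : ℝ)) ≤ c₀ ^ (γ * n) :=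
        Real.rpow_le_rpow_of_exponent_ge hc₀pos hc₀lt1.le hmR
      have hb2 : c₀ ^ (γ * (n:ℝ)) = c₁ ^ n := by
        rw [Real.rpow_mul hc₀pos.le, hc₁, Real.rpow_natCast]
      rw [← hb2]
      exact hb1
    calc ∑ X ∈ (univ : Finset β).powerset.filter
          (fun X => ¬ (p * ((𝓗 v).card : ℝ) / 2
            ≤ (((𝓗 v).filter (fun A => A ⊆ X)).card : ℝ))),
          q ^ X.card * (1 - q) ^ ((univ : Finset β) \ X).card
        ≤ (1 - p / 2) ^ (𝓗 v).card / (2⁻¹ : ℝ) ^ (p * ((𝓗 v).card : ℝ) / 2) := hmk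
      _ = c₀ ^ (𝓗 v).card := hstep1
      _ ≤ c₁ ^ n := hstep2
  -- union bound, pointwise
  have pointwise : ∀ X ∈ (univ : Finset β).powerset,
      q ^ X.card * (1 - q) ^ ((univ : Finset β) \ X).card
        - (if ¬ ((X.card : ℝ) ≤ 2 * n * q)
            then q ^ X.card * (1 - q) ^ ((univ : Finset β) \ X).card else 0)
        - (∑ v : β, if ¬ (p * ((𝓗 v).card : ℝ) / 2
            ≤ (((𝓗 v).filter (fun A => A ⊆ X)).card : ℝ))
            then q ^ X.card * (1 - q) ^ ((univ : Finset β) \ X).card else 0)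
      ≤ (if ((X.card : ℝ) ≤ 2 * n * q ∧
            ∀ v : β, p * ((𝓗 v).card : ℝ) / 2 ≤
              (((𝓗 v).filter (fun A => A ⊆ X)).card : ℝ))
          then q ^ X.card * (1 - q) ^ ((univ : Finset β) \ X).card else 0) := by
    intro X _
    have hW0 := hwnn X
    have hnn : ∀ v ∈ (univ : Finset β),
        (0:ℝ) ≤ if ¬ (p * ((𝓗 v).card : ℝ) / 2
          ≤ (((𝓗 v).filter (fun A => A ⊆ X)).card : ℝ))
          then q ^ X.card * (1 - q) ^ ((univ : Finset β) \ X).card else 0 := by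
      intro v _
      split
      · exact hW0
      · exact le_rfl
    have hsum0 : (0:ℝ) ≤ ∑ v : β, if ¬ (p * ((𝓗 v).card : ℝ) / 2
        ≤ (((𝓗 v).filter (fun A => A ⊆ X)).card : ℝ))
        then q ^ X.card * (1 - q) ^ ((univ : Finset β) \ X).card else 0 :=
      Finset.sum_nonneg hnn
    by_cases hg : ((X.card : ℝ) ≤ 2 * n * q ∧
        ∀ v : β, p * ((𝓗 v).card : ℝ) / 2 ≤ (((𝓗 v).filter (fun A => A ⊆ X)).card : ℝ))
    · rw [if_pos hg, if_neg (not_not_intro hg.1)]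
      have hzero : (∑ v : β, if ¬ (p * ((𝓗 v).card : ℝ) / 2
          ≤ (((𝓗 v).filter (fun A => A ⊆ X)).card : ℝ))
          then q ^ X.card * (1 - q) ^ ((univ : Finset β) \ X).card else 0) = 0 :=
        Finset.sum_eq_zero fun v _ => if_neg (not_not_intro (hg.2 v))
      rw [hzero]
      simp
    · rw [if_neg hg]
      by_cases hc1 : (X.card : ℝ) ≤ 2 * n * q
      · have hex : ∃ v : β, ¬ (p * ((𝓗 v).card : ℝ) / 2
            ≤ (((𝓗 v).filter (fun A => A ⊆ X)).card : ℝ)) := by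
          by_contra hall
          push_neg at hall
          exact hg ⟨hc1, hall⟩
        obtain ⟨v, hv⟩ := hex
        have hle : q ^ X.card * (1 - q) ^ ((univ : Finset β) \ X).card
            ≤ ∑ v : β, if ¬ (p * ((𝓗 v).card : ℝ) / 2
              ≤ (((𝓗 v).filter (fun A => A ⊆ X)).card : ℝ))
              then q ^ X.card * (1 - q) ^ ((univ : Finset β) \ X).card else 0 := by
          have hs := Finset.single_le_sum hnn (Finset.mem_univ v)
          rwa [if_pos hv] at hs
        rw [if_neg (not_not_intro hc1)]
        linarith
      · rw [if_pos hc1]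
        linarith
  -- assemble
  have hlower := Finset.sum_le_sum pointwise
  have hexpand : ∑ X ∈ (univ : Finset β).powerset,
      (q ^ X.card * (1 - q) ^ ((univ : Finset β) \ X).card
        - (if ¬ ((X.card : ℝ) ≤ 2 * n * q)
            then q ^ X.card * (1 - q) ^ ((univ : Finset β) \ X).card else 0)
        - (∑ v : β, if ¬ (p * ((𝓗 v).card : ℝ) / 2
            ≤ (((𝓗 v).filter (fun A => A ⊆ X)).card : ℝ))
            then q ^ X.card * (1 - q) ^ ((univ : Finset β) \ X).card else 0))
      = (∑ X ∈ (univ : Finset β).powerset,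
          q ^ X.card * (1 - q) ^ ((univ : Finset β) \ X).card)
        - (∑ X ∈ (univ : Finset β).powerset,
            if ¬ ((X.card : ℝ) ≤ 2 * n * q)
            then q ^ X.card * (1 - q) ^ ((univ : Finset β) \ X).card else 0)
        - (∑ X ∈ (univ : Finset β).powerset, ∑ v : β,
            if ¬ (p * ((𝓗 v).card : ℝ) / 2
              ≤ (((𝓗 v).filter (fun A => A ⊆ X)).card : ℝ))
            then q ^ X.card * (1 - q) ^ ((univ : Finset β) \ X).card else 0) := by
    rw [Finset.sum_sub_distrib, Finset.sum_sub_distrib]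
  have hvtotal : ∑ X ∈ (univ : Finset β).powerset, ∑ v : β,
      (if ¬ (p * ((𝓗 v).card : ℝ) / 2
        ≤ (((𝓗 v).filter (fun A => A ⊆ X)).card : ℝ))
        then q ^ X.card * (1 - q) ^ ((univ : Finset β) \ X).card else 0)
      ≤ (n : ℝ) * c₁ ^ n := by
    rw [Finset.sum_comm]
    calc ∑ v : β, ∑ X ∈ (univ : Finset β).powerset,
          (if ¬ (p * ((𝓗 v).card : ℝ) / 2
            ≤ (((𝓗 v).filter (fun A => A ⊆ X)).card : ℝ))
            then q ^ X.card * (1 - q) ^ ((univ : Finset β) \ X).card else 0)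
        ≤ ∑ _v : β, c₁ ^ n := Finset.sum_le_sum fun v _ => vertexbound v
      _ = (n : ℝ) * c₁ ^ n := by
          rw [Finset.sum_const, Finset.card_univ, hcard, nsmul_eq_mul]
  have hmass := bern_mass q (univ : Finset β)
  have hNn : (n : ℝ) * c₁ ^ n < 1/2 := hN n hnN
  calc (0:ℝ) < 1 - 1/2 - (n : ℝ) * c₁ ^ n := by linarith
    _ ≤ (∑ X ∈ (univ : Finset β).powerset,
          q ^ X.card * (1 - q) ^ ((univ : Finset β) \ X).card)
        - (∑ X ∈ (univ : Finset β).powerset,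
            if ¬ ((X.card : ℝ) ≤ 2 * n * q)
            then q ^ X.card * (1 - q) ^ ((univ : Finset β) \ X).card else 0)
        - (∑ X ∈ (univ : Finset β).powerset, ∑ v : β,
            if ¬ (p * ((𝓗 v).card : ℝ) / 2
              ≤ (((𝓗 v).filter (fun A => A ⊆ X)).card : ℝ))
            then q ^ X.card * (1 - q) ^ ((univ : Finset β) \ X).card else 0) := by
        rw [hmass]
        linarith [sizebound, hvtotal]
    _ = ∑ X ∈ (univ : Finset β).powerset,
        (q ^ X.card * (1 - q) ^ ((univ : Finset β) \ X).card
          - (if ¬ ((X.card : ℝ) ≤ 2 * n * q)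
              then q ^ X.card * (1 - q) ^ ((univ : Finset β) \ X).card else 0)
          - (∑ v : β, if ¬ (p * ((𝓗 v).card : ℝ) / 2
              ≤ (((𝓗 v).filter (fun A => A ⊆ X)).card : ℝ))
              then q ^ X.card * (1 - q) ^ ((univ : Finset β) \ X).card else 0)) := hexpand.symm
    _ ≤ _ := hlower
end
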